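/- arXiv:2208.10549 — 2 statements merged into one kernel-verified Lean document; each statement's English description precedes it below -/
import Mathlib

section
/- Let R₁ ∈ ℝ^{n×n} be symmetric positive definite, let d_m > 0, let τ ∈ [0, d_m], let t ∈ ℝ, and let Z : ℝ → ℝⁿ be continuously differentiable. Then d_m · ∫_{t−d_m}^{t} Ż(s)ᵀ R₁ Ż(s) ds ≥ (Z(t) − Z(t−τ))ᵀ R₁ (Z(t) − Z(t−τ)) + (Z(t−τ) − Z(t−d_m))ᵀ R₁ (Z(t−τ) − Z(t−d_m)). Equivalently, −d_m · ∫_{t−d_m}^{t} Ż(s)ᵀ R₁ Ż(s) ds ≤ ξᵀ M ξ, where ξ = (Z(t), Z(t−d_m), Z(t−τ)) ∈ ℝ^{3n} and M is the symmetric 3×3 block matrix with diagonal blocks −R₁, −R₁, −2R₁, blocks M_{13} = M_{23} = R₁, and M_{12} = 0. -/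
/-!
On each of `[t - d_m, t - τ]` and `[t - τ, t]`, Jensen's inequality for the convex quadratic form
`x ↦ xᵀ R₁ x` bounds the form of `∫ Ż`, i.e. of the increment of `Z`, by the length of the interval
times `∫ Żᵀ R₁ Ż`. Both lengths are at most `d_m`, and the two integrals add up to the one over
`[t - d_m, t]`. The second inequality is the first with the quadratic forms expanded.
-/

open Matrix intervalIntegral MeasureTheory

namespace Matrix

variable {ι : Type*} [Fintype ι] {R : Matrix ι ι ℝ}

theorem IsHermitian.dotProduct_mulVec_comm (hR : R.IsHermitian) (x y : ι → ℝ) :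
    x ⬝ᵥ (R *ᵥ y) = y ⬝ᵥ (R *ᵥ x) := by
  have hRt : Rᵀ = R := by simpa [conjTranspose_eq_transpose_of_trivial] using hR.eq
  rw [dotProduct_mulVec, ← vecMul_transpose, hRt, dotProduct_comm]

theorem IsHermitian.sub_dotProduct_mulVec_sub (hR : R.IsHermitian) (x y : ι → ℝ) :
    (x - y) ⬝ᵥ (R *ᵥ (x - y))
      = x ⬝ᵥ (R *ᵥ x) - 2 * (x ⬝ᵥ (R *ᵥ y)) + y ⬝ᵥ (R *ᵥ y) := by
  simp only [mulVec_sub, sub_dotProduct, dotProduct_sub, hR.dotProduct_mulVec_comm y x]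
  ring

theorem PosSemidef.convexOn_dotProduct_mulVec (hR : R.PosSemidef) :
    ConvexOn ℝ Set.univ fun x : ι → ℝ => x ⬝ᵥ (R *ᵥ x) := by
  refine ⟨convex_univ, fun x _ y _ a b _ _ hab => ?_⟩
  have hxy : 0 ≤ (x - y) ⬝ᵥ (R *ᵥ (x - y)) := by
    simpa using hR.dotProduct_mulVec_nonneg (x - y)
  rw [hR.isHermitian.sub_dotProduct_mulVec_sub] at hxy
  simp only [mulVec_add, mulVec_smul, add_dotProduct, dotProduct_add, smul_dotProduct,
    dotProduct_smul, smul_eq_mul, hR.isHermitian.dotProduct_mulVec_comm y x]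
  -- `a q(x) + b q(y) - q(a x + b y) = a b q(x - y)` when `a + b = 1`
  obtain rfl : b = 1 - a := by linarith
  nlinarith [mul_nonneg ‹0 ≤ a› ‹0 ≤ 1 - a›]

theorem continuous_dotProduct_mulVec (R : Matrix ι ι ℝ) :
    Continuous fun x : ι → ℝ => x ⬝ᵥ (R *ᵥ x) :=
  continuous_id.dotProduct (continuous_const.matrix_mulVec continuous_id)

theorem PosSemidef.dotProduct_mulVec_integral_le (hR : R.PosSemidef) {a b : ℝ} (hab : a ≤ b)
    {f : ℝ → ι → ℝ} (hf : Continuous f) :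
    (∫ s in a..b, f s) ⬝ᵥ (R *ᵥ ∫ s in a..b, f s)
      ≤ (b - a) * ∫ s in a..b, f s ⬝ᵥ (R *ᵥ f s) := by
  rcases hab.eq_or_lt with rfl | hlt
  · simp
  have hq := R.continuous_dotProduct_mulVec
  have jensen := hR.convexOn_dotProduct_mulVec.map_set_average_le (μ := volume)
    (t := Set.Ioc a b) hq.continuousOn isClosed_univ (by simp [hlt]) (by simp) (by simp)
    hf.integrableOn_Ioc (hq.comp hf).integrableOn_Ioc
  simp only [setAverage_eq, Real.volume_real_Ioc_of_le hab,
    ← integral_of_le hab, mulVec_smul, smul_dotProduct, dotProduct_smul, smul_eq_mul] at jensen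
  have hba : 0 < b - a := sub_pos.2 hlt
  field_simp at jensen
  linarith

theorem PosSemidef.dotProduct_mulVec_integral_add_le (hR : R.PosSemidef) {a c b : ℝ}
    (hac : a ≤ c) (hcb : c ≤ b) {f : ℝ → ι → ℝ} (hf : Continuous f) :
    (∫ s in c..b, f s) ⬝ᵥ (R *ᵥ ∫ s in c..b, f s)
        + (∫ s in a..c, f s) ⬝ᵥ (R *ᵥ ∫ s in a..c, f s)
      ≤ (b - a) * ∫ s in a..b, f s ⬝ᵥ (R *ᵥ f s) := by
  have hqf (x y : ℝ) : IntervalIntegrable (fun s => f s ⬝ᵥ (R *ᵥ f s)) volume x y :=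
    (R.continuous_dotProduct_mulVec.comp hf).intervalIntegrable x y
  have hq_nonneg (s : ℝ) : 0 ≤ f s ⬝ᵥ (R *ᵥ f s) := by
    simpa using hR.dotProduct_mulVec_nonneg (f s)
  have hcb_nonneg : 0 ≤ ∫ s in c..b, f s ⬝ᵥ (R *ᵥ f s) :=
    integral_nonneg hcb fun s _ => hq_nonneg s
  have hac_nonneg : 0 ≤ ∫ s in a..c, f s ⬝ᵥ (R *ᵥ f s) :=
    integral_nonneg hac fun s _ => hq_nonneg s
  rw [← integral_add_adjacent_intervals (hqf a c) (hqf c b)]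
  nlinarith [hR.dotProduct_mulVec_integral_le hcb hf, hR.dotProduct_mulVec_integral_le hac hf]

end Matrix

theorem stmt3_general (n : ℕ) (R1 : Matrix (Fin n) (Fin n) ℝ) (hR1 : R1.PosDef)
    (dm : ℝ) (τ : ℝ) (hτ : τ ∈ Set.Icc 0 dm) (t : ℝ)
    (Z : ℝ → (Fin n → ℝ)) (hZ : ContDiff ℝ 1 Z) :
    ((Z t - Z (t - τ)) ⬝ᵥ (R1 *ᵥ (Z t - Z (t - τ)))
        + (Z (t - τ) - Z (t - dm)) ⬝ᵥ (R1 *ᵥ (Z (t - τ) - Z (t - dm)))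
      ≤ dm * ∫ s in (t - dm)..t, (deriv Z s) ⬝ᵥ (R1 *ᵥ deriv Z s)) ∧
    (-(dm * ∫ s in (t - dm)..t, (deriv Z s) ⬝ᵥ (R1 *ᵥ deriv Z s))
      ≤ -(Z t ⬝ᵥ (R1 *ᵥ Z t)) - Z (t - dm) ⬝ᵥ (R1 *ᵥ Z (t - dm))
          - 2 * (Z (t - τ) ⬝ᵥ (R1 *ᵥ Z (t - τ)))
          + 2 * (Z t ⬝ᵥ (R1 *ᵥ Z (t - τ)))
          + 2 * (Z (t - dm) ⬝ᵥ (R1 *ᵥ Z (t - τ)))) := by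
  obtain ⟨hτ_nonneg, hτ_le⟩ := hτ
  have hZ' : Continuous (deriv Z) := hZ.continuous_deriv le_rfl
  have ftc (a b : ℝ) : ∫ s in a..b, deriv Z s = Z b - Z a :=
    integral_deriv_eq_sub (fun x _ => hZ.differentiable one_ne_zero x) (hZ'.intervalIntegrable a b)
  have jensen := hR1.posSemidef.dotProduct_mulVec_integral_add_le
    (show t - dm ≤ t - τ by linarith) (show t - τ ≤ t by linarith) hZ'
  rw [ftc, ftc, sub_sub_cancel] at jensen
  refine ⟨jensen, ?_⟩
  have hR1' := hR1.isHermitian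
  rw [hR1'.sub_dotProduct_mulVec_sub, hR1'.sub_dotProduct_mulVec_sub,
    hR1'.dotProduct_mulVec_comm (Z (t - τ)) (Z (t - dm))] at jensen
  linarith

/-- **Lemma 2, Jensen-type delay inequality.** For `R₁` symmetric positive
definite, `0 < d_m`, `τ ∈ [0, d_m]`, and `Z : ℝ → ℝⁿ` continuously differentiable,
`d_m ∫_{t−d_m}^t Żᵀ R₁ Ż ds ≥ (Z(t)−Z(t−τ))ᵀR₁(Z(t)−Z(t−τ))
  + (Z(t−τ)−Z(t−d_m))ᵀR₁(Z(t−τ)−Z(t−d_m))`;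
equivalently `−d_m ∫_{t−d_m}^t Żᵀ R₁ Ż ds ≤ ξᵀ M ξ` where `ξ = (Z(t), Z(t−d_m), Z(t−τ))`
and `M` is the symmetric block matrix with diagonal blocks `−R₁, −R₁, −2R₁`,
`M₁₃ = M₂₃ = R₁` and `M₁₂ = 0` (the quadratic form `ξᵀMξ` is written out below). -/
theorem stmt3 (n : ℕ) (R1 : Matrix (Fin n) (Fin n) ℝ) (hR1 : R1.PosDef)
    (dm : ℝ) (hdm : 0 < dm) (τ : ℝ) (hτ : τ ∈ Set.Icc 0 dm) (t : ℝ)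
    (Z : ℝ → (Fin n → ℝ)) (hZ : ContDiff ℝ 1 Z) :
    ((Z t - Z (t - τ)) ⬝ᵥ (R1 *ᵥ (Z t - Z (t - τ)))
        + (Z (t - τ) - Z (t - dm)) ⬝ᵥ (R1 *ᵥ (Z (t - τ) - Z (t - dm)))
      ≤ dm * ∫ s in (t - dm)..t, (deriv Z s) ⬝ᵥ (R1 *ᵥ deriv Z s)) ∧
    (-(dm * ∫ s in (t - dm)..t, (deriv Z s) ⬝ᵥ (R1 *ᵥ deriv Z s))
      ≤ -(Z t ⬝ᵥ (R1 *ᵥ Z t)) - Z (t - dm) ⬝ᵥ (R1 *ᵥ Z (t - dm))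
          - 2 * (Z (t - τ) ⬝ᵥ (R1 *ᵥ Z (t - τ)))
          + 2 * (Z t ⬝ᵥ (R1 *ᵥ Z (t - τ)))
          + 2 * (Z (t - dm) ⬝ᵥ (R1 *ᵥ Z (t - τ)))) :=
  stmt3_general n R1 hR1 dm τ hτ t Z hZ
end

section
/- Consider N agents with matrices A_i ∈ ℝ^{n_i×n_i}, B_i ∈ ℝ^{n_i×p_i}, C_i ∈ ℝ^{q×n_i}, gains K_i, and matrices U_i, W_i, X_i satisfying the regulator equations B_iU_i = A_iX_i, B_iW_i = X_i, C_iX_i = I_q; let A, B, C, K, U, W, X denote the block-diagonal aggregations and suppose A − BK is invertible. Let L ∈ ℝ^{N×N} be a Laplacian matrix with L·1_N = 0, 1_Nᵀ L = 0, and kernel exactly span{1_N}; set L̃ = L ⊗ I_q. Let f_i : ℝ^q → ℝ be differentiable and strongly convex, let α, β > 0, and let ∇f̃(y) = col(∇f₁(y₁),…,∇f_N(y_N)) for y = col(y₁,…,y_N). Suppose (x̄, η̄, z̄) satisfies the equilibrium equations: (A − BK)x̄ − B(U − KX)η̄ = 0, 0 = −∇f̃(ȳ) − αβ L̃ ȳ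 − β L̃ (η̄ + z̄), and αβ L̃ ȳ = 0, where ȳ = C x̄. Then x̄ = X η̄, ȳ = η̄, there is y* ∈ ℝ^q with ȳ = 1_N ⊗ y*, Σ_{i=1}^N ∇f_i(y*) = 0, and y* is the unique global minimizer of F(θ) = Σ_{i=1}^N f_i(θ). -/
open Matrix
open scoped RealInnerProductSpace

/-!
Since `B(U − KX) = (A − BK)X`, invertibility of `A − BK` forces `x̄ = Xη̄`, whence
`ȳ = CXη̄ = η̄`. The third equation puts every coordinate of `ȳ` in `ker L = span 1`, so all
`ȳ_i` equal one `y*`; summing the second equation over the agents kills the Laplacian terms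
because `1ᵀL = 0`, so `Σ ∇f_i(y*) = 0`. Strong monotonicity of `∇f_i` integrates along segments to
`f_i θ ≥ f_i y* + ⟪∇f_i y*, θ − y*⟫ + m_i/2 ‖θ − y*‖²`; summing, `F` grows quadratically away
from `y*`, which is therefore its unique minimizer.
-/

namespace Matrix

variable {𝕜 : Type*} [RCLike 𝕜] {m n o : Type*} [Fintype m] [Fintype n] [DecidableEq n]
  [Fintype o] [DecidableEq o]

lemma injective_toEuclideanLin_of_isUnit {M : Matrix n n 𝕜} (hM : IsUnit M) :
    Function.Injective (toEuclideanLin M) :=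
  (Module.End.isUnit_iff _).mp (hM.map (toLpLinAlgEquiv 2 : Matrix n n 𝕜 ≃ₐ[𝕜] _)) |>.injective

lemma eq_toEuclideanLin_of_regulator {A : Matrix n n 𝕜} {B : Matrix n m 𝕜}
    {K : Matrix m n 𝕜} {U : Matrix m o 𝕜} {X : Matrix n o 𝕜} (hreg : B * U = A * X)
    (hinv : IsUnit (A - B * K)) {x : EuclideanSpace 𝕜 n} {η : EuclideanSpace 𝕜 o}
    (h : toEuclideanLin (A - B * K) x - toEuclideanLin (B * (U - K * X)) η = 0) :
    x = toEuclideanLin X η := by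
  have hBU : B * (U - K * X) = (A - B * K) * X := by
    rw [Matrix.mul_sub, Matrix.sub_mul, hreg, Matrix.mul_assoc]
  rw [sub_eq_zero, hBU, toLpLin_mul_same, LinearMap.comp_apply] at h
  exact injective_toEuclideanLin_of_isUnit hinv h

lemma sum_sum_smul_eq_zero_of_one_vecMul_eq_zero {ι R M : Type*} [Fintype ι] [CommSemiring R]
    [AddCommMonoid M] [Module R M] {L : Matrix ι ι R} (h : (fun _ => 1) ᵥ* L = 0)
    (v : ι → M) : ∑ i, ∑ j, L i j • v j = 0 := by
  rw [Finset.sum_comm]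
  refine Finset.sum_eq_zero fun j _ => ?_
  have hj : ∑ i, L i j = 0 := by simpa [vecMul, dotProduct] using congrFun h j
  rw [← Finset.sum_smul, hj, zero_smul]

lemma eq_of_forall_sum_smul_eq_zero {ι κ : Type*} [Fintype ι] {L : Matrix ι ι 𝕜}
    (hker : ∀ v : ι → 𝕜, L *ᵥ v = 0 → ∃ c : 𝕜, v = fun _ => c)
    {y : ι → EuclideanSpace 𝕜 κ} (hy : ∀ i, ∑ j, L i j • y j = 0) (i i' : ι) :
    y i = y i' := by
  ext k
  obtain ⟨c, hc⟩ : ∃ c : 𝕜, (fun j => y j k) = fun _ => c := by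
    refine hker _ (funext fun i'' => ?_)
    simpa [mulVec, dotProduct] using congrArg (fun v : EuclideanSpace 𝕜 κ => v k) (hy i'')
  exact (congrFun hc i).trans (congrFun hc i').symm

end Matrix

lemma unique_minimizer_of_quadratic_growth {E : Type*} [NormedAddCommGroup E] {F : E → ℝ} {x : E}
    {c : ℝ} (hc : 0 < c)
    (hF : ∀ θ, F x + c * ‖θ - x‖ ^ 2 ≤ F θ) :
    (∀ θ, F x ≤ F θ) ∧ ∀ θ, (∀ θ', F θ ≤ F θ') → θ = x := by
  refine ⟨fun θ => ?_, fun θ hθ => ?_⟩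
  · nlinarith [hF θ, sq_nonneg ‖θ - x‖]
  · have hsq : ‖θ - x‖ ^ 2 ≤ 0 := by nlinarith [hF θ, hθ x]
    rw [← sub_eq_zero, ← norm_eq_zero]
    exact pow_eq_zero_iff two_ne_zero |>.mp (le_antisymm hsq (sq_nonneg _))

section StronglyMonotoneGradient

variable {E : Type*} [NormedAddCommGroup E] [InnerProductSpace ℝ E] [CompleteSpace E]

lemma HasGradientAt.hasDerivAt_comp_line {f : E → ℝ} {f' u d : E} {t : ℝ}
    (hf : HasGradientAt f f' (u + t • d)) :
    HasDerivAt (fun s : ℝ => f (u + s • d)) ⟪f', d⟫ t := by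
  have hline : HasDerivAt (fun s : ℝ => u + s • d) d t := by
    simpa using ((hasDerivAt_id t).smul_const d).const_add u
  simpa [InnerProductSpace.toDual_apply_apply, Function.comp_def] using
    hf.hasFDerivAt.comp_hasDerivAt t hline

lemma Differentiable.add_inner_gradient_add_le_of_strongly_monotone {f : E → ℝ}
    (hf : Differentiable ℝ f) {m : ℝ}
    (hmono : ∀ u w : E, m * ‖u - w‖ ^ 2 ≤ ⟪gradient f u - gradient f w, u - w⟫) (u w : E) :
    f u + ⟪gradient f u, w - u⟫ + m / 2 * ‖w - u‖ ^ 2 ≤ f w := by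
  set d := w - u
  set G := ⟪gradient f u, d⟫
  -- `g` has derivative `⟪∇f(u + t d) - ∇f u, d⟫ - m t ‖d‖²`, which is nonnegative for `t > 0`.
  let g : ℝ → ℝ := fun t => f (u + t • d) - t * G - m / 2 * ‖d‖ ^ 2 * t ^ 2
  have hg : ∀ t : ℝ, HasDerivAt g (⟪gradient f (u + t • d), d⟫ - G - m * ‖d‖ ^ 2 * t) t := by
    intro t
    have hsq := (hasDerivAt_pow 2 t).const_mul (m / 2 * ‖d‖ ^ 2)
    exact (((hf (u + t • d)).hasGradientAt.hasDerivAt_comp_line.sub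
      ((hasDerivAt_id t).mul_const G)).sub hsq).congr_deriv (by push_cast; ring)
  have hg_mono : MonotoneOn g (Set.Icc 0 1) := by
    refine monotoneOn_of_deriv_nonneg (convex_Icc 0 1)
      (fun t _ => (hg t).continuousAt.continuousWithinAt)
      (fun t _ => (hg t).differentiableAt.differentiableWithinAt) fun t ht => ?_
    rw [interior_Icc] at ht
    have key := hmono (u + t • d) u
    rw [add_sub_cancel_left, real_inner_smul_right, inner_sub_left, norm_smul,
      Real.norm_of_nonneg ht.1.le] at key
    rw [(hg t).deriv]
    nlinarith [ht.1]
  have h01 := hg_mono (Set.left_mem_Icc.2 zero_le_one) (Set.right_mem_Icc.2 zero_le_one)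
    zero_le_one
  simp only [g, zero_smul, add_zero, zero_mul, sub_zero, one_smul, one_mul, one_pow, mul_one,
    ne_eq, OfNat.ofNat_ne_zero, not_false_eq_true, zero_pow, d, add_sub_cancel] at h01
  linarith

lemma unique_minimizer_sum_of_sum_gradient_eq_zero {ι : Type*} [Fintype ι] [Nonempty ι]
    {f : ι → E → ℝ} (hdiff : ∀ i, Differentiable ℝ (f i))
    (hconv : ∀ i, ∃ m : ℝ, 0 < m ∧ ∀ u w : E,
      m * ‖u - w‖ ^ 2 ≤ ⟪gradient (f i) u - gradient (f i) w, u - w⟫)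
    {y : E} (hy : ∑ i, gradient (f i) y = 0) :
    (∀ θ, ∑ i, f i y ≤ ∑ i, f i θ) ∧ ∀ θ, (∀ θ', ∑ i, f i θ ≤ ∑ i, f i θ') → θ = y := by
  choose m hm hmono using hconv
  refine unique_minimizer_of_quadratic_growth (F := fun θ => ∑ i, f i θ) (c := (∑ i, m i) / 2)
    (half_pos (Finset.sum_pos (fun i _ => hm i) Finset.univ_nonempty)) fun θ => ?_
  have hinner : ∑ i, ⟪gradient (f i) y, θ - y⟫ = 0 := by rw [← sum_inner, hy, inner_zero_left]
  calc ∑ i, f i y + (∑ i, m i) / 2 * ‖θ - y‖ ^ 2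
      = ∑ i, (f i y + ⟪gradient (f i) y, θ - y⟫ + m i / 2 * ‖θ - y‖ ^ 2) := by
        rw [Finset.sum_add_distrib, Finset.sum_add_distrib, hinner, add_zero,
          ← Finset.sum_mul, Finset.sum_div]
    _ ≤ ∑ i, f i θ := Finset.sum_le_sum fun i _ =>
        (hdiff i).add_inner_gradient_add_le_of_strongly_monotone (hmono i) y θ

end StronglyMonotoneGradient

theorem stmt5_general (N q : ℕ) (hN : 0 < N)
    (n p : Fin N → ℕ)
    (A : ∀ i, Matrix (Fin (n i)) (Fin (n i)) ℝ)
    (B : ∀ i, Matrix (Fin (n i)) (Fin (p i)) ℝ)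
    (C : ∀ i, Matrix (Fin q) (Fin (n i)) ℝ)
    (K : ∀ i, Matrix (Fin (p i)) (Fin (n i)) ℝ)
    (U : ∀ i, Matrix (Fin (p i)) (Fin q) ℝ)
    (X : ∀ i, Matrix (Fin (n i)) (Fin q) ℝ)
    (hreg1 : ∀ i, B i * U i = A i * X i)
    (hreg3 : ∀ i, C i * X i = 1)
    (hinv : ∀ i, IsUnit (A i - B i * K i))
    (L : Matrix (Fin N) (Fin N) ℝ)
    (h1L : (fun _ => (1 : ℝ)) ᵥ* L = 0)
    (hker : ∀ v : Fin N → ℝ, L *ᵥ v = 0 → ∃ cc : ℝ, v = fun _ => cc)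
    (f : Fin N → EuclideanSpace ℝ (Fin q) → ℝ)
    (hdiff : ∀ i, Differentiable ℝ (f i))
    (hconv : ∀ i, ∃ m : ℝ, 0 < m ∧ ∀ u w : EuclideanSpace ℝ (Fin q),
      m * ‖u - w‖ ^ 2 ≤ ⟪gradient (f i) u - gradient (f i) w, u - w⟫)
    (αg βg : ℝ) (hα : 0 < αg) (hβ : 0 < βg)
    (xbar : ∀ i, EuclideanSpace ℝ (Fin (n i)))
    (ηbar zbar ybar : Fin N → EuclideanSpace ℝ (Fin q))
    (hy : ∀ i, ybar i = Matrix.toEuclideanLin (C i) (xbar i))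
    (heq1 : ∀ i, Matrix.toEuclideanLin (A i - B i * K i) (xbar i)
        - Matrix.toEuclideanLin (B i * (U i - K i * X i)) (ηbar i) = 0)
    (heq2 : ∀ i, (0 : EuclideanSpace ℝ (Fin q))
        = -gradient (f i) (ybar i) - (αg * βg) • (∑ j, L i j • ybar j)
          - βg • (∑ j, L i j • (ηbar j + zbar j)))
    (heq3 : ∀ i, (αg * βg) • (∑ j, L i j • ybar j) = 0) :
    (∀ i, xbar i = Matrix.toEuclideanLin (X i) (ηbar i)) ∧
    (∀ i, ybar i = ηbar i) ∧
    ∃ ystar : EuclideanSpace ℝ (Fin q),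
      (∀ i, ybar i = ystar) ∧
      (∑ i, gradient (f i) ystar = 0) ∧
      (∀ θ, ∑ i, f i ystar ≤ ∑ i, f i θ) ∧
      (∀ θ, (∀ θ', ∑ i, f i θ ≤ ∑ i, f i θ') → θ = ystar) := by
  have hx : ∀ i, xbar i = toEuclideanLin (X i) (ηbar i) := fun i =>
    eq_toEuclideanLin_of_regulator (hreg1 i) (hinv i) (heq1 i)
  have hyη : ∀ i, ybar i = ηbar i := fun i => by
    rw [hy i, hx i, ← LinearMap.comp_apply, ← toLpLin_mul_same, hreg3 i, toLpLin_one,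
      LinearMap.id_apply]
  have hLy : ∀ i, ∑ j, L i j • ybar j = 0 := fun i =>
    (smul_eq_zero.mp (heq3 i)).resolve_left (mul_pos hα hβ).ne'
  let i₀ : Fin N := ⟨0, hN⟩
  have hconsensus : ∀ i, ybar i = ybar i₀ := fun i => eq_of_forall_sum_smul_eq_zero hker hLy i i₀
  have hgrad : ∀ i, gradient (f i) (ybar i₀) = -(βg • ∑ j, L i j • (ηbar j + zbar j)) := by
    intro i
    have h := heq2 i
    rw [hLy i, smul_zero, sub_zero, sub_eq_add_neg, ← neg_add, eq_comm, neg_eq_zero] at h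
    rw [← hconsensus i, eq_neg_iff_add_eq_zero, h]
  have hgrad_sum : ∑ i, gradient (f i) (ybar i₀) = 0 := by
    simp only [hgrad, Finset.sum_neg_distrib, ← Finset.smul_sum,
      sum_sum_smul_eq_zero_of_one_vecMul_eq_zero h1L, smul_zero, neg_zero]
  have : Nonempty (Fin N) := ⟨i₀⟩
  exact ⟨hx, hyη, ybar i₀, hconsensus, hgrad_sum,
    unique_minimizer_sum_of_sum_gradient_eq_zero hdiff hconv hgrad_sum⟩

/-- **equilibrium points are optimal.**  For `N` heterogeneous agents with
regulator equations `B_iU_i = A_iX_i`, `B_iW_i = X_i`, `C_iX_i = I_q`, invertible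
`A − BK` (blockwise), a Laplacian `L` with `L1 = 0`, `1ᵀL = 0` and kernel exactly
`span{1}`, and differentiable strongly convex local costs `f_i`: any equilibrium
`(x̄, η̄, z̄)` of the closed loop (written blockwise, with `ȳ = Cx̄`) satisfies
`x̄ = Xη̄`, `ȳ = η̄`, `ȳ = 1_N ⊗ y*` with `Σ_i ∇f_i(y*) = 0`, and `y*` is the unique
global minimizer of `F = Σ_i f_i`. -/
theorem stmt5 (N q : ℕ) (hN : 0 < N)
    (n p : Fin N → ℕ)
    (A : ∀ i, Matrix (Fin (n i)) (Fin (n i)) ℝ)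
    (B : ∀ i, Matrix (Fin (n i)) (Fin (p i)) ℝ)
    (C : ∀ i, Matrix (Fin q) (Fin (n i)) ℝ)
    (K : ∀ i, Matrix (Fin (p i)) (Fin (n i)) ℝ)
    (U W : ∀ i, Matrix (Fin (p i)) (Fin q) ℝ)
    (X : ∀ i, Matrix (Fin (n i)) (Fin q) ℝ)
    (hreg1 : ∀ i, B i * U i = A i * X i)
    (hreg2 : ∀ i, B i * W i = X i)
    (hreg3 : ∀ i, C i * X i = 1)
    (hinv : ∀ i, IsUnit (A i - B i * K i))
    (L : Matrix (Fin N) (Fin N) ℝ)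
    (hL1 : L *ᵥ (fun _ => (1 : ℝ)) = 0)
    (h1L : (fun _ => (1 : ℝ)) ᵥ* L = 0)
    (hker : ∀ v : Fin N → ℝ, L *ᵥ v = 0 → ∃ cc : ℝ, v = fun _ => cc)
    (f : Fin N → EuclideanSpace ℝ (Fin q) → ℝ)
    (hdiff : ∀ i, Differentiable ℝ (f i))
    (hconv : ∀ i, ∃ m : ℝ, 0 < m ∧ ∀ u w : EuclideanSpace ℝ (Fin q),
      m * ‖u - w‖ ^ 2 ≤ ⟪gradient (f i) u - gradient (f i) w, u - w⟫)
    (αg βg : ℝ) (hα : 0 < αg) (hβ : 0 < βg)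
    (xbar : ∀ i, EuclideanSpace ℝ (Fin (n i)))
    (ηbar zbar ybar : Fin N → EuclideanSpace ℝ (Fin q))
    (hy : ∀ i, ybar i = Matrix.toEuclideanLin (C i) (xbar i))
    (heq1 : ∀ i, Matrix.toEuclideanLin (A i - B i * K i) (xbar i)
        - Matrix.toEuclideanLin (B i * (U i - K i * X i)) (ηbar i) = 0)
    (heq2 : ∀ i, (0 : EuclideanSpace ℝ (Fin q))
        = -gradient (f i) (ybar i) - (αg * βg) • (∑ j, L i j • ybar j)
          - βg • (∑ j, L i j • (ηbar j + zbar j)))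
    (heq3 : ∀ i, (αg * βg) • (∑ j, L i j • ybar j) = 0) :
    (∀ i, xbar i = Matrix.toEuclideanLin (X i) (ηbar i)) ∧
    (∀ i, ybar i = ηbar i) ∧
    ∃ ystar : EuclideanSpace ℝ (Fin q),
      (∀ i, ybar i = ystar) ∧
      (∑ i, gradient (f i) ystar = 0) ∧
      (∀ θ, ∑ i, f i ystar ≤ ∑ i, f i θ) ∧
      (∀ θ, (∀ θ', ∑ i, f i θ ≤ ∑ i, f i θ') → θ = ystar) :=
  stmt5_general N q hN n p A B C K U X hreg1 hreg3 hinv L h1L hker f hdiff hconv αg βg hα hβ xbar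
    ηbar zbar ybar hy heq1 heq2 heq3
end
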